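/- arXiv:1208.1558 — 7 statements merged into one kernel-verified Lean document; each statement's English description precedes it below -/
import Mathlib

section
/- Let W be a nonnegative integer valued random variable with finite mean. If E[(1-p)(r+W)g(W+1) - W g(W)] = 0 for all bounded functions g: ℤ≥0 → ℝ, then W has the negative binomial distribution NB(r,p). -/
open MeasureTheory

/-- The negative binomial pmf `NB(r,p)`: `P(Y=k) = Γ(r+k)/(k! Γ(r)) (1-p)^k p^r`. -/
noncomputable def nbPMF (r p : ℝ) (k : ℕ) : ℝ :=
  Real.Gamma (r + k) / (Nat.factorial k * Real.Gamma r) * (1 - p) ^ k * p ^ r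

/-!
Testing the Stein identity against the indicator of `{n + 1}` gives the recurrence
`(n + 1) P(W = n + 1) = (1 - p)(r + n) P(W = n)`, which `NB(r,p)` satisfies as well, since
`Γ(r + n + 1) = (r + n) Γ(r + n)`. A first-order recurrence determines a sequence up to a scalar
factor, and that factor is fixed by both sequences summing to `1`; for `NB(r,p)` this is the
binomial series `∑ multichoose r n xⁿ = (1 - x)^(-r)` at `x = 1 - p`.
-/

open Finset

theorem Real.Gamma_add_nat_div_Gamma_eq {r : ℝ} (hr : ∀ k : ℕ, r ≠ -k) (n : ℕ) :
    Real.Gamma (r + n) / Real.Gamma r = (ascPochhammer ℝ n).eval r := by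
  induction n with
  | zero => simpa using div_self (Real.Gamma_ne_zero hr)
  | succ n ih =>
    have hrn : r + n ≠ 0 := fun h => hr n (by linarith)
    rw [ascPochhammer_succ_right, Polynomial.eval_mul, Polynomial.eval_add, Polynomial.eval_X,
      Polynomial.eval_natCast, ← ih, Nat.cast_succ, ← add_assoc, Real.Gamma_add_one hrn]
    ring

theorem Real.multichoose_eq_Gamma_div {r : ℝ} (hr : ∀ k : ℕ, r ≠ -k) (n : ℕ) :
    Ring.multichoose r n = Real.Gamma (r + n) / (n.factorial * Real.Gamma r) := by
  have h := Ring.factorial_nsmul_multichoose_eq_ascPochhammer r n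
  rw [Polynomial.ascPochhammer_smeval_eq_eval, ← Real.Gamma_add_nat_div_Gamma_eq hr,
    nsmul_eq_mul] at h
  rw [mul_comm, ← div_div, ← h, mul_div_cancel_left₀ _ (Nat.cast_ne_zero.2 n.factorial_ne_zero)]

theorem nbPMF_eq_choose {r : ℝ} (hr : 0 < r) (p : ℝ) (k : ℕ) :
    nbPMF r p k = Ring.choose (r + k - 1) k * (1 - p) ^ k * p ^ r := by
  rw [← Ring.multichoose_eq, Real.multichoose_eq_Gamma_div, nbPMF]
  intro j hj
  linarith [j.cast_nonneg (α := ℝ)]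

theorem hasSum_nbPMF {r p : ℝ} (hr : 0 < r) (hp0 : 0 < p) (hp2 : p < 2) :
    HasSum (nbPMF r p) 1 := by
  have hx : 1 - p ∈ Metric.eball (0 : ℝ) 1 := by
    rw [Metric.mem_eball, edist_zero_right, enorm_eq_nnnorm, ENNReal.coe_lt_one_iff,
      ← NNReal.coe_lt_one, coe_nnnorm, Real.norm_eq_abs, abs_lt]
    constructor <;> linarith
  have h := (Real.one_div_one_sub_rpow_hasFPowerSeriesOnBall_zero r).hasSum hx
  simp only [FormalMultilinearSeries.ofScalars_apply_eq, smul_eq_mul, zero_add,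
    sub_sub_cancel] at h
  rw [funext (nbPMF_eq_choose hr p)]
  simpa [(Real.rpow_pos_of_pos hp0 r).ne'] using h.mul_right (p ^ r)

theorem succ_mul_nbPMF_succ {r : ℝ} (hr : 0 < r) (p : ℝ) (k : ℕ) :
    (k + 1) * nbPMF r p (k + 1) = (1 - p) * (r + k) * nbPMF r p k := by
  have hrk : r + k ≠ 0 := by positivity
  have hΓ : Real.Gamma (r + (k + 1 : ℕ)) = (r + k) * Real.Gamma (r + k) := by
    rw [Nat.cast_succ, ← add_assoc, Real.Gamma_add_one hrk]
  have := Real.Gamma_pos_of_pos hr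
  rw [nbPMF, nbPMF, hΓ]
  simp only [Nat.factorial_succ, Nat.cast_mul, Nat.cast_succ]
  field_simp
  ring

theorem eq_mul_prod_of_succ_mul_eq {a c : ℕ → ℝ} (h : ∀ n : ℕ, (n + 1) * a (n + 1) = c n * a n)
    (n : ℕ) : a n = a 0 * ∏ i ∈ range n, c i / (i + 1) := by
  induction n with
  | zero => simp
  | succ n ih =>
    have hn : (n : ℝ) + 1 ≠ 0 := by positivity
    rw [prod_range_succ, ← mul_assoc, ← ih]
    field_simp
    linarith [h n]

theorem eq_of_succ_mul_eq_of_hasSum_one {a b c : ℕ → ℝ}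
    (ha : ∀ n : ℕ, (n + 1) * a (n + 1) = c n * a n) (hb : ∀ n : ℕ, (n + 1) * b (n + 1) = c n * b n)
    (ha1 : HasSum a 1) (hb1 : HasSum b 1) : a = b := by
  have hsum_prod {d : ℕ → ℝ} (hd : ∀ n : ℕ, (n + 1) * d (n + 1) = c n * d n) (hd1 : HasSum d 1) :
      d 0 ≠ 0 ∧ HasSum (fun n => ∏ i ∈ range n, c i / (i + 1)) (d 0)⁻¹ := by
    rw [funext (eq_mul_prod_of_succ_mul_eq hd)] at hd1
    have hd0 : d 0 ≠ 0 := by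
      rintro h0
      simp only [h0, zero_mul] at hd1
      exact one_ne_zero (hd1.unique hasSum_zero)
    refine ⟨hd0, ?_⟩
    simpa only [← mul_assoc, inv_mul_cancel₀ hd0, one_mul, mul_one] using hd1.mul_left (d 0)⁻¹
  obtain ⟨-, haw⟩ := hsum_prod ha ha1
  obtain ⟨-, hbw⟩ := hsum_prod hb hb1
  have h0 : a 0 = b 0 := inv_injective (haw.unique hbw)
  funext n
  rw [eq_mul_prod_of_succ_mul_eq ha, eq_mul_prod_of_succ_mul_eq hb, h0]

theorem succ_mul_eq_of_forall_bounded_tsum_eq_zero {q a b : ℕ → ℝ}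
    (h : ∀ g : ℕ → ℝ, (∃ C, ∀ k, |g k| ≤ C) → ∑' k, q k * (a k * g (k + 1) - b k * g k) = 0)
    (n : ℕ) : b (n + 1) * q (n + 1) = a n * q n := by
  have hg : ∃ C, ∀ k, |Pi.single (M := fun _ => ℝ) (n + 1) 1 k| ≤ C :=
    ⟨1, fun k => by by_cases hk : k = n + 1 <;> simp [hk]⟩
  have h0 := h _ hg
  rw [tsum_eq_sum (s := {n, n + 1}), sum_pair (by omega)] at h0
  · simp only [Pi.single_eq_same, mul_one, ne_eq, Nat.left_eq_add, one_ne_zero,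
      not_false_eq_true, Pi.single_eq_of_ne, mul_zero, sub_zero, Nat.add_eq_left, zero_sub,
      mul_neg] at h0
    linarith
  · intro k hk
    simp only [mem_insert, mem_singleton, not_or] at hk
    simp [hk.1, hk.2]

theorem hasSum_measure_preimage_singleton_toReal {Ω β : Type*} [MeasurableSpace Ω]
    [MeasurableSpace β] [Countable β] [MeasurableSingletonClass β] (μ : Measure Ω)
    [IsProbabilityMeasure μ] {W : Ω → β} (hW : Measurable W) :
    HasSum (fun k => (μ (W ⁻¹' {k})).toReal) 1 := by
  have h : ∑' k, μ (W ⁻¹' {k}) = 1 := by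
    rw [← measure_iUnion (pairwise_disjoint_fiber W) (fun k => hW (measurableSet_singleton k)),
      ← Set.preimage_iUnion, Set.iUnion_singleton_eq_range, Set.range_id', Set.preimage_univ,
      measure_univ]
  have := ENNReal.hasSum_toReal (h ▸ ENNReal.one_ne_top)
  rwa [← ENNReal.tsum_toReal_eq (fun _ => measure_ne_top μ _), h, ENNReal.toReal_one] at this

theorem stmt1_general {Ω : Type*} [MeasurableSpace Ω] (μ : Measure Ω) [IsProbabilityMeasure μ]
    (W : Ω → ℕ) (hW : Measurable W)
    (r p : ℝ) (hr : 0 < r) (hp0 : 0 < p) (hp1 : p ≤ 1)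
    (hchar : ∀ g : ℕ → ℝ, (∃ C, ∀ k, |g k| ≤ C) →
      ∑' k : ℕ, (μ (W ⁻¹' {k})).toReal * ((1 - p) * (r + k) * g (k + 1) - k * g k) = 0) :
    ∀ k : ℕ, (μ (W ⁻¹' {k})).toReal = nbPMF r p k := by
  have hrec (n : ℕ) := succ_mul_eq_of_forall_bounded_tsum_eq_zero hchar n
  push_cast at hrec
  exact congrFun <| eq_of_succ_mul_eq_of_hasSum_one hrec (succ_mul_nbPMF_succ hr p)
    (hasSum_measure_preimage_singleton_toReal μ hW) (hasSum_nbPMF hr hp0 (by linarith))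

/-- If a nonnegative integer valued random variable `W` with finite mean satisfies
`E[(1-p)(r+W)g(W+1) - W g(W)] = 0` for all bounded `g`, then `W ~ NB(r,p)`. -/
theorem stmt1 {Ω : Type*} [MeasurableSpace Ω] (μ : Measure Ω) [IsProbabilityMeasure μ]
    (W : Ω → ℕ) (hW : Measurable W)
    (r p : ℝ) (hr : 0 < r) (hp0 : 0 < p) (hp1 : p ≤ 1)
    (hmean : Summable fun k : ℕ => (k : ℝ) * (μ (W ⁻¹' {k})).toReal)
    (hchar : ∀ g : ℕ → ℝ, (∃ C, ∀ k, |g k| ≤ C) →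
      ∑' k : ℕ, (μ (W ⁻¹' {k})).toReal * ((1 - p) * (r + k) * g (k + 1) - k * g k) = 0) :
    ∀ k : ℕ, (μ (W ⁻¹' {k})).toReal = nbPMF r p k :=
  stmt1_general μ W hW r p hr hp0 hp1 hchar
end

section
/- For the Pólya urn count U_{r,n} (number of white balls drawn in n-1 draws from an urn starting with weight r of white and 1 black, where at each draw a white ball is drawn with probability (r+current white count)/(r+number of previous draws), and drawing white adds one to the white count), and any function g: ℤ≥0 → ℝ such that expectations are defined, E[(U_{r,n}/r + 1) g(U_{r,n}+1) - (U_{r,n}/r) g(U_{r,n})] = g(n) for every n ≥ 1. -/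
/-- `polyaPMF r d k` is the probability that `k` white balls have been drawn in `d` draws
from a Pólya urn started with weight `r` of white and `1` black: at the draw taking the
count of previous draws from `d` to `d+1`, a white ball is drawn with probability
`(r + current white count)/(r + d + 1)`.  Thus `U_{r,n}` of the paper, the number of white
balls drawn in `n-1` draws, has pmf `polyaPMF r (n-1)`. -/
noncomputable def polyaPMF (r : ℝ) : ℕ → ℕ → ℝ
  | 0, k => if k = 0 then 1 else 0
  | d + 1, 0 => polyaPMF r d 0 * (1 - r / (r + (d + 1)))
  | d + 1, k + 1 =>
      polyaPMF r d (k + 1) * (1 - (r + (k + 1)) / (r + (d + 1)))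
        + polyaPMF r d k * ((r + k) / (r + (d + 1)))

/-!
Writing `E_d` for the expectation under `polyaPMF r d`, one draw of the urn gives
`E_{d+1} f = E_d f + E_d[(r + k)(f(k+1) - f k)] / (r + d + 1)`, and
`(r + k)(f(k+1) - f k) = r (D_r f(k) - f(k))`. Hence `E_{d+1}` is determined by `E_d` and
`E_d ∘ D_r`, and the identity `E_d[D_r g] = g(d+1)` for all `g` propagates by induction on `d`:
applied to `g` and to `D_r g` it gives
`E_{d+1}[D_r g] = g(d+1) + r (D_r g(d+1) - g(d+1)) / (r + d + 1) = g(d+2)`.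
-/

open Finset

noncomputable section

-- The operator `D_r` of the paper.
def steinOperator (r : ℝ) (g : ℕ → ℝ) (k : ℕ) : ℝ :=
  ((k : ℝ) / r + 1) * g (k + 1) - ((k : ℝ) / r) * g k

-- `polyaPMF r d` is supported on `{0, …, d}`, so this is `E[f(U_{r,d+1})]`.
def polyaExpect (r : ℝ) (d : ℕ) (f : ℕ → ℝ) : ℝ :=
  ∑ k ∈ range (d + 1), polyaPMF r d k * f k

end

lemma polyaPMF_eq_zero_of_lt (r : ℝ) {d k : ℕ} (h : d < k) : polyaPMF r d k = 0 := by
  induction d generalizing k with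
  | zero =>
    obtain ⟨k, rfl⟩ := Nat.exists_eq_add_one_of_ne_zero (by omega : k ≠ 0)
    simp [polyaPMF]
  | succ d ih =>
    obtain ⟨k, rfl⟩ := Nat.exists_eq_add_one_of_ne_zero (by omega : k ≠ 0)
    simp [polyaPMF, ih (by omega : d < k + 1), ih (by omega : d < k)]

lemma polyaExpect_succ (r : ℝ) (d : ℕ) (f : ℕ → ℝ) :
    polyaExpect r (d + 1) f =
      polyaExpect r d f +
        polyaExpect r d (fun k => (r + k) * (f (k + 1) - f k)) / (r + (d + 1)) := by
  set c : ℝ := r + (d + 1)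
  have hdrop_last : ∑ k ∈ range (d + 2), polyaPMF r d k * (1 - (r + k) / c) * f k =
      ∑ k ∈ range (d + 1), polyaPMF r d k * (1 - (r + k) / c) * f k := by
    rw [sum_range_succ, polyaPMF_eq_zero_of_lt r (Nat.lt_succ_self d)]
    simp
  have hsplit : polyaExpect r (d + 1) f =
      ∑ k ∈ range (d + 2), polyaPMF r d k * (1 - (r + k) / c) * f k +
        ∑ k ∈ range (d + 1), polyaPMF r d k * ((r + k) / c) * f (k + 1) := by
    rw [polyaExpect, sum_range_succ' _ (d + 1), sum_range_succ' _ (d + 1)]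
    simp only [polyaPMF, add_mul, sum_add_distrib]
    push_cast
    ring
  rw [hsplit, hdrop_last, polyaExpect, polyaExpect, sum_div, ← sum_add_distrib, ← sum_add_distrib]
  refine sum_congr rfl fun k _ => ?_
  ring

lemma mul_steinOperator {r : ℝ} (hr : r ≠ 0) (g : ℕ → ℝ) (k : ℕ) :
    r * steinOperator r g k = (r + k) * (g (k + 1) - g k) + r * g k := by
  unfold steinOperator
  field_simp
  ring

lemma polyaExpect_succ_eq_of_ne_zero {r : ℝ} (hr : r ≠ 0) (d : ℕ) (f : ℕ → ℝ) :
    polyaExpect r (d + 1) f =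
      polyaExpect r d f +
        r * (polyaExpect r d (steinOperator r f) - polyaExpect r d f) / (r + (d + 1)) := by
  have hdrift : polyaExpect r d (fun k => (r + k) * (f (k + 1) - f k)) =
      r * (polyaExpect r d (steinOperator r f) - polyaExpect r d f) := by
    simp only [polyaExpect, mul_sub, mul_sum]
    rw [← sum_sub_distrib]
    refine sum_congr rfl fun k _ => ?_
    linear_combination -polyaPMF r d k * mul_steinOperator hr f k
  rw [polyaExpect_succ, hdrift]

theorem polyaExpect_steinOperator {r : ℝ} (hr : 0 < r) (d : ℕ) (g : ℕ → ℝ) :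
    polyaExpect r d (steinOperator r g) = g (d + 1) := by
  induction d generalizing g with
  | zero => simp [polyaExpect, polyaPMF, steinOperator]
  | succ d ih =>
    have hc : r + (d + 1 : ℝ) ≠ 0 := by positivity
    rw [polyaExpect_succ_eq_of_ne_zero hr.ne', ih, ih, steinOperator]
    field_simp
    push_cast
    ring

/-- `E[(U_{r,n}/r + 1) g(U_{r,n}+1) - (U_{r,n}/r) g(U_{r,n})] = g(n)` for all `n ≥ 1`.
Since `U_{r,n} ≤ n - 1`, the expectation is the finite sum over `k < n`. -/
theorem stmt2 (r : ℝ) (hr : 0 < r) (n : ℕ) (hn : 1 ≤ n) (g : ℕ → ℝ) :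
    ∑ k ∈ Finset.range n, polyaPMF r (n - 1) k *
      (((k : ℝ) / r + 1) * g (k + 1) - ((k : ℝ) / r) * g k) = g n := by
  obtain ⟨m, rfl⟩ := Nat.exists_eq_add_of_le' hn
  exact polyaExpect_steinOperator hr m g
end

section
/- Let X be a nonnegative integer valued random variable with finite mean μ > 0, let X^s have the size bias distribution of X, and let X^{*_r} = U_{r,X^s} have the r-equilibrium distribution of X (mixing the Pólya urn variables over the size-biased value). Then for any function g such that the expectations are defined, μ E[D_r g(X^{*_r})] = E[X g(X)], where D_r g(k) = (k/r+1)g(k+1) - (k/r)g(k). -/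
open Finset

/-- The paper's `D_r g`. -/
noncomputable def equilibriumDiff (r : ℝ) (g : ℕ → ℝ) (k : ℕ) : ℝ :=
  ((k : ℝ) / r + 1) * g (k + 1) - (k : ℝ) / r * g k

lemma sum_polyaPMF_succ_mul (r : ℝ) (d : ℕ) (f : ℕ → ℝ) :
    ∑ k ∈ range (d + 2), polyaPMF r (d + 1) k * f k
      = ∑ k ∈ range (d + 1), polyaPMF r d k *
          ((1 - (r + k) / (r + (d + 1))) * f k + (r + k) / (r + (d + 1)) * f (k + 1)) := by
  have hstay : ∑ k ∈ range (d + 2), polyaPMF r d k * ((1 - (r + k) / (r + (d + 1))) * f k)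
      = ∑ k ∈ range (d + 1), polyaPMF r d k * ((1 - (r + k) / (r + (d + 1))) * f k) := by
    rw [sum_range_succ, polyaPMF_eq_zero_of_lt r (Nat.lt_succ_self d), zero_mul, add_zero]
  have hdraw : ∀ k : ℕ, polyaPMF r (d + 1) (k + 1) * f (k + 1)
      = polyaPMF r d (k + 1) * ((1 - (r + (k + 1 : ℕ)) / (r + (d + 1))) * f (k + 1))
        + polyaPMF r d k * ((r + k) / (r + (d + 1)) * f (k + 1)) := fun k => by
    simp only [polyaPMF]
    push_cast
    ring
  have hdraw₀ : polyaPMF r (d + 1) 0 * f 0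
      = polyaPMF r d 0 * ((1 - (r + (0 : ℕ)) / (r + (d + 1))) * f 0) := by
    simp only [polyaPMF]
    push_cast
    ring
  rw [sum_range_succ', sum_congr rfl fun k _ => hdraw k, hdraw₀, sum_add_distrib, add_right_comm,
    ← sum_range_succ' (fun k => polyaPMF r d k * ((1 - (r + k) / (r + (d + 1))) * f k)), hstay,
    ← sum_add_distrib]
  simp only [mul_add]

lemma polyaStep_average_equilibriumDiff (r : ℝ) (hr : 0 < r) (d : ℕ) (g : ℕ → ℝ) (k : ℕ) :
    (1 - (r + k) / (r + (d + 1))) * equilibriumDiff r g k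
        + (r + k) / (r + (d + 1)) * equilibriumDiff r g (k + 1)
      = equilibriumDiff r
          (fun j => ((r + j) * g (j + 1) + ((d : ℝ) + 1 - j) * g j) / (r + (d + 1))) k := by
  simp only [equilibriumDiff]
  push_cast
  field_simp
  ring

theorem sum_polyaPMF_mul_equilibriumDiff (r : ℝ) (hr : 0 < r) (d : ℕ) (g : ℕ → ℝ) :
    ∑ k ∈ range (d + 1), polyaPMF r d k * equilibriumDiff r g k = g (d + 1) := by
  induction d generalizing g with
  | zero => simp [polyaPMF, equilibriumDiff]
  | succ d ih =>
    rw [sum_polyaPMF_succ_mul]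
    simp_rw [polyaStep_average_equilibriumDiff r hr d g]
    rw [ih]
    push_cast
    field_simp
    ring

lemma natCast_mul_tsum_polyaPMF_pred_mul_equilibriumDiff (r : ℝ) (hr : 0 < r) (g : ℕ → ℝ)
    (n : ℕ) : (n : ℝ) * ∑' k, polyaPMF r (n - 1) k * equilibriumDiff r g k = n * g n := by
  rcases n with _ | d
  · simp
  · have hsupp : ∀ k ∉ range (d + 1), polyaPMF r d k * equilibriumDiff r g k = 0 :=
      fun k hk => by
        rw [polyaPMF_eq_zero_of_lt r (by simpa using hk), zero_mul]
    rw [Nat.add_sub_cancel, tsum_eq_sum hsupp, sum_polyaPMF_mul_equilibriumDiff r hr]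

theorem stmt3_general (r : ℝ) (hr : 0 < r) (pX : ℕ → ℝ)
    (μ : ℝ) (hμpos : 0 < μ)
    (g : ℕ → ℝ)
    (hjoint : Summable fun q : ℕ × ℕ =>
      (q.2 : ℝ) * pX q.2 * polyaPMF r (q.2 - 1) q.1 *
        (((q.1 : ℝ) / r + 1) * g (q.1 + 1) - (q.1 : ℝ) / r * g q.1)) :
    μ * ∑' k : ℕ, (∑' n : ℕ, (n : ℝ) * pX n / μ * polyaPMF r (n - 1) k) *
        (((k : ℝ) / r + 1) * g (k + 1) - (k : ℝ) / r * g k)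
      = ∑' n : ℕ, (n : ℝ) * pX n * g n := by
  change μ * ∑' k, (∑' n : ℕ, (n : ℝ) * pX n / μ * polyaPMF r (n - 1) k) *
      equilibriumDiff r g k = _
  have hmix : ∀ k, μ * ((∑' n : ℕ, (n : ℝ) * pX n / μ * polyaPMF r (n - 1) k) *
      equilibriumDiff r g k)
        = ∑' n : ℕ, (n : ℝ) * pX n * polyaPMF r (n - 1) k * equilibriumDiff r g k := fun k => by
    rw [← tsum_mul_right, ← tsum_mul_left]
    refine tsum_congr fun n => ?_
    field_simp
  calc _ = ∑' k, ∑' n : ℕ, (n : ℝ) * pX n * polyaPMF r (n - 1) k * equilibriumDiff r g k := by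
        rw [← tsum_mul_left, tsum_congr hmix]
    _ = ∑' n : ℕ, ∑' k, (n : ℝ) * pX n * polyaPMF r (n - 1) k * equilibriumDiff r g k :=
        hjoint.tsum_comm.symm
    _ = ∑' n : ℕ, (n : ℝ) * pX n * g n := tsum_congr fun n => by
        simp_rw [mul_comm (n : ℝ) (pX n), mul_assoc, tsum_mul_left,
          natCast_mul_tsum_polyaPMF_pred_mul_equilibriumDiff r hr g n]

/-- If `X` has pmf `pX` with finite mean `μ > 0`, `X^s` is its size bias and
`X^{*_r} = U_{r,X^s}` its `r`-equilibrium transform (pmf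
`k ↦ ∑' n, (n pX n / μ) polyaPMF r (n-1) k`), then
`μ E[D_r g(X^{*_r})] = E[X g(X)]` whenever the expectations are defined. -/
theorem stmt3 (r : ℝ) (hr : 0 < r) (pX : ℕ → ℝ) (hnn : ∀ k, 0 ≤ pX k)
    (hone : ∑' k : ℕ, pX k = 1)
    (μ : ℝ) (hμs : Summable fun n : ℕ => (n : ℝ) * pX n)
    (hμ : μ = ∑' n : ℕ, (n : ℝ) * pX n) (hμpos : 0 < μ)
    (g : ℕ → ℝ)
    (hjoint : Summable fun q : ℕ × ℕ =>
      (q.2 : ℝ) * pX q.2 * polyaPMF r (q.2 - 1) q.1 *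
        (((q.1 : ℝ) / r + 1) * g (q.1 + 1) - (q.1 : ℝ) / r * g q.1))
    (hXg : Summable fun n : ℕ => (n : ℝ) * pX n * g n) :
    μ * ∑' k : ℕ, (∑' n : ℕ, (n : ℝ) * pX n / μ * polyaPMF r (n - 1) k) *
        (((k : ℝ) / r + 1) * g (k + 1) - (k : ℝ) / r * g k)
      = ∑' n : ℕ, (n : ℝ) * pX n * g n :=
  stmt3_general r hr pX μ hμpos g hjoint
end

section
/- Let m ∈ ℕ, δ > -m, and let Z ∼ K(m,δ), the mixture NB(m+δ, U^{1/(2+δ/m)}) where U is uniform on (0,1). Then for every l ∈ ℤ≥0, P(Z=l) = (2+δ/m) · Γ(l+m+δ)Γ(m+2+δ+δ/m) / (Γ(m+δ)Γ(l+m+3+δ+δ/m)). -/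
/-!
With `c = 2 + δ/m` and `a = m + δ`, the substitution `u = t ^ c` turns the mixing integral
`∫₀¹ (1 - u^(1/c))^l u^(a/c) du` into `c ∫₀¹ t^(a+c-1) (1-t)^l dt = c B(a + c, l + 1)`,
and the Beta function is a ratio of Gamma values.
-/

open MeasureTheory Set

theorem integral_Ioo_rpow_mul_one_sub_rpow {α β : ℝ} (hα : 0 < α) (hβ : 0 < β) :
    ∫ x in Ioo (0 : ℝ) 1, x ^ (α - 1) * (1 - x) ^ (β - 1)
      = Real.Gamma α * Real.Gamma β / Real.Gamma (α + β) := by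
  have hbeta : Complex.betaIntegral α β
      = ((∫ x in Ioo (0 : ℝ) 1, x ^ (α - 1) * (1 - x) ^ (β - 1) : ℝ) : ℂ) := by
    rw [← integral_complex_ofReal, Complex.betaIntegral,
      intervalIntegral.integral_of_le zero_le_one, integral_Ioc_eq_integral_Ioo]
    refine setIntegral_congr_fun measurableSet_Ioo fun x hx => ?_
    push_cast
    rw [Complex.ofReal_cpow hx.1.le, Complex.ofReal_cpow (sub_nonneg.2 hx.2.le)]
    push_cast
    ring
  rw [Complex.betaIntegral_eq_Gamma_mul_div _ _ (by simpa using hα) (by simpa using hβ)] at hbeta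
  rw [← Complex.ofReal_add, Complex.Gamma_ofReal, Complex.Gamma_ofReal, Complex.Gamma_ofReal]
    at hbeta
  exact_mod_cast hbeta.symm

theorem integral_Ioo_comp_rpow {E : Type*} [NormedAddCommGroup E] [NormedSpace ℝ E]
    (g : ℝ → E) {p a b : ℝ} (hp : 0 < p) (ha : 0 ≤ a) (hab : a ≤ b) :
    ∫ x in Ioo a b, (p * x ^ (p - 1)) • g (x ^ p) = ∫ y in Ioo (a ^ p) (b ^ p), g y := by
  have hsub : Icc a b ⊆ Ici 0 := fun x hx => ha.trans hx.1
  have himage : (· ^ p) '' Ioo a b = Ioo (a ^ p) (b ^ p) :=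
    (Real.continuous_rpow_const hp.le).continuousOn.image_Ioo_of_strictMonoOn hab
      ((Real.strictMonoOn_rpow_Ici_of_exponent_pos hp).mono hsub)
  rw [← himage, integral_image_eq_integral_abs_deriv_smul measurableSet_Ioo
    (fun x hx => (Real.hasDerivAt_rpow_const (Or.inl (ha.trans_lt hx.1).ne')).hasDerivWithinAt)
    ((Real.rpow_left_injOn hp.ne').mono fun x hx => hsub (Ioo_subset_Icc_self hx))]
  refine setIntegral_congr_fun measurableSet_Ioo fun x hx => ?_
  rw [abs_of_nonneg (by have := ha.trans_lt hx.1; positivity)]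

theorem integral_Ioo_one_sub_rpow_inv_pow_mul_rpow {a c : ℝ} (hc : 0 < c) (hac : 0 < a + c)
    (l : ℕ) :
    ∫ u in Ioo (0 : ℝ) 1, (1 - u ^ (1 / c)) ^ l * u ^ (a / c)
      = c * Real.Gamma (a + c) * l.factorial / Real.Gamma (a + c + l + 1) := by
  have hsubst := integral_Ioo_comp_rpow (fun u => (1 - u ^ (1 / c)) ^ l * u ^ (a / c)) hc
    le_rfl zero_le_one
  rw [Real.zero_rpow hc.ne', Real.one_rpow] at hsubst
  have hintegrand : ∀ t ∈ Ioo (0 : ℝ) 1,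
      (c * t ^ (c - 1)) • ((1 - (t ^ c) ^ (1 / c)) ^ l * (t ^ c) ^ (a / c))
        = c * (t ^ (a + c - 1) * (1 - t) ^ ((l + 1 : ℝ) - 1)) := by
    intro t ht
    rw [← Real.rpow_mul ht.1.le, ← Real.rpow_mul ht.1.le, mul_one_div_cancel hc.ne',
      mul_div_cancel₀ a hc.ne', Real.rpow_one, add_sub_cancel_right, Real.rpow_natCast,
      show a + c - 1 = (c - 1) + a by ring, Real.rpow_add ht.1, smul_eq_mul]
    ring
  rw [← hsubst, setIntegral_congr_fun measurableSet_Ioo hintegrand, integral_const_mul,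
    integral_Ioo_rpow_mul_one_sub_rpow hac (by positivity), Real.Gamma_nat_eq_factorial,
    ← add_assoc]
  ring

theorem stmt12_general (m : ℕ) (δ : ℝ) (hδ : -(m : ℝ) < δ) (l : ℕ) :
    (∫ u in Set.Ioo (0 : ℝ) 1,
        Real.Gamma ((m : ℝ) + δ + l) / (Nat.factorial l * Real.Gamma ((m : ℝ) + δ))
          * (1 - u ^ (1 / (2 + δ / (m : ℝ)))) ^ l
          * u ^ (((m : ℝ) + δ) / (2 + δ / (m : ℝ))))
      = (2 + δ / (m : ℝ))
          * (Real.Gamma ((l : ℝ) + m + δ) * Real.Gamma ((m : ℝ) + 2 + δ + δ / (m : ℝ)))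
          / (Real.Gamma ((m : ℝ) + δ) * Real.Gamma ((l : ℝ) + m + 3 + δ + δ / (m : ℝ))) := by
  -- for `m = 0` this holds because `δ / 0 = 0`
  have hdm : -1 < δ / m := by
    rcases (Nat.cast_nonneg m : (0 : ℝ) ≤ m).eq_or_lt with hm | hm
    · simp [← hm]
    · rw [lt_div_iff₀ hm]; linarith
  simp_rw [mul_assoc, integral_const_mul]
  rw [integral_Ioo_one_sub_rpow_inv_pow_mul_rpow (by linarith) (by linarith)]
  rw [show (m : ℝ) + δ + (2 + δ / m) + l + 1 = l + m + 3 + δ + δ / m by ring,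
    show (m : ℝ) + δ + (2 + δ / m) = m + 2 + δ + δ / m by ring,
    show (m : ℝ) + δ + l = l + m + δ by ring]
  field_simp

/-- The point probabilities of the mixture `K(m,δ) = NB(m+δ, U^{1/(2+δ/m)})`, `U` uniform
on `(0,1)`: for every `l`,
`P(Z=l) = (2+δ/m) Γ(l+m+δ) Γ(m+2+δ+δ/m) / (Γ(m+δ) Γ(l+m+3+δ+δ/m))`. -/
theorem stmt12 (m : ℕ) (hm : 1 ≤ m) (δ : ℝ) (hδ : -(m : ℝ) < δ) (l : ℕ) :
    (∫ u in Set.Ioo (0 : ℝ) 1,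
        Real.Gamma ((m : ℝ) + δ + l) / (Nat.factorial l * Real.Gamma ((m : ℝ) + δ))
          * (1 - u ^ (1 / (2 + δ / (m : ℝ)))) ^ l
          * u ^ (((m : ℝ) + δ) / (2 + δ / (m : ℝ))))
      = (2 + δ / (m : ℝ))
          * (Real.Gamma ((l : ℝ) + m + δ) * Real.Gamma ((m : ℝ) + 2 + δ + δ / (m : ℝ)))
          / (Real.Gamma ((m : ℝ) + δ) * Real.Gamma ((l : ℝ) + m + 3 + δ + δ / (m : ℝ))) :=
  stmt12_general m δ hδ l
end

section
/- Let m ∈ ℕ, δ > -m, c = (2+δ/m)Γ(m+2+δ+δ/m)/Γ(m+δ), and Z ∼ K(m,δ). Then P(Z=k) · k^{3+δ/m} → c as k → ∞; i.e. K(m,δ) has power law tails with exponent 3+δ/m. -/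
/-! Euler's limit formula `k ^ a * k! / (a (a + 1) ⋯ (a + k)) → Γ(a)`, combined with
`Γ(k + a) = a (a + 1) ⋯ (a + k - 1) Γ(a)`, gives `Γ(k + a) ~ k ^ a Γ(k)`. Hence
`Γ(k + a) / Γ(k + b) ~ k ^ (a - b)`, and `P(Z = k)` is a constant times such a ratio with
`a = m + δ` and `b - a = 3 + δ/m`. -/

open Filter Topology Asymptotics Nat

namespace Real

lemma Gamma_nat_add_eq_prod_mul {a : ℝ} (ha : 0 < a) (k : ℕ) :
    Gamma (k + a) = (∏ j ∈ Finset.range k, (a + j)) * Gamma a := by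
  induction k with
  | zero => simp
  | succ k ih =>
    rw [Finset.prod_range_succ, cast_succ, add_right_comm, add_comm (k : ℝ) a,
      Gamma_add_one (by positivity), add_comm a, ih]
    ring

lemma Gamma_nat_add_mul_GammaSeq {a : ℝ} (ha : 0 < a) (k : ℕ) :
    Gamma (k + a) * (a + k) * GammaSeq a k = k ^ a * k ! * Gamma a := by
  rw [GammaSeq, Finset.prod_range_succ, Gamma_nat_add_eq_prod_mul ha]
  field_simp

theorem isEquivalent_Gamma_nat_add {a : ℝ} (ha : 0 < a) :
    (fun k : ℕ => Gamma (k + a)) ~[atTop] fun k => (k : ℝ) ^ a * Gamma k := by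
  have hΓa : Gamma a ≠ 0 := (Gamma_pos_of_pos ha).ne'
  have hlim : Tendsto (fun k : ℕ => Gamma a / GammaSeq a k * (k / (k + a))) atTop
      (𝓝 (Gamma a / Gamma a * 1)) :=
    (tendsto_const_nhds.div (GammaSeq_tendsto_Gamma a) hΓa).mul (tendsto_natCast_div_add_atTop a)
  rw [div_self hΓa, mul_one] at hlim
  refine isEquivalent_of_tendsto_one (hlim.congr' ?_)
  filter_upwards [eventually_ge_atTop 1] with k hk
  have hk0 : (0 : ℝ) < k := by exact_mod_cast hk
  have hfact : (k ! : ℝ) = k * Gamma k := by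
    rw [← Gamma_nat_eq_factorial, Gamma_add_one hk0.ne']
  have hseq0 : 0 < GammaSeq a k := by unfold GammaSeq; positivity
  have hΓ : Gamma (k + a) = k ^ a * (k * Gamma k) * Gamma a / ((a + k) * GammaSeq a k) := by
    rw [eq_div_iff (by positivity), ← mul_assoc, ← hfact, Gamma_nat_add_mul_GammaSeq ha]
  simp only [Pi.div_apply, hΓ]
  field_simp
  ring

theorem tendsto_Gamma_nat_add_div_Gamma_nat_add_mul_rpow {a b : ℝ} (ha : 0 < a) (hb : 0 < b) :
    Tendsto (fun k : ℕ => Gamma (k + a) / Gamma (k + b) * (k : ℝ) ^ (b - a)) atTop (𝓝 1) := by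
  have hequiv := ((isEquivalent_Gamma_nat_add ha).div (isEquivalent_Gamma_nat_add hb)).mul
    (IsEquivalent.refl (u := fun k : ℕ => (k : ℝ) ^ (b - a)))
  refine hequiv.symm.tendsto_nhds (tendsto_const_nhds.congr' ?_)
  filter_upwards [eventually_ge_atTop 1] with k hk
  have hk0 : (0 : ℝ) < k := by exact_mod_cast hk
  simp only [Pi.mul_apply, Pi.div_apply]
  rw [rpow_sub hk0]
  field_simp

end Real

/-- `K(m,δ)` has power law tails with exponent `3 + δ/m`:
`P(Z=k) k^{3+δ/m} → c = (2+δ/m)Γ(m+2+δ+δ/m)/Γ(m+δ)` as `k → ∞`. -/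
theorem stmt13 (m : ℕ) (hm : 1 ≤ m) (δ : ℝ) (hδ : -(m : ℝ) < δ)
    (c : ℝ)
    (hc : c = (2 + δ / (m : ℝ)) * Real.Gamma ((m : ℝ) + 2 + δ + δ / (m : ℝ))
      / Real.Gamma ((m : ℝ) + δ))
    (P : ℕ → ℝ)
    (hP : ∀ l : ℕ, P l = (2 + δ / (m : ℝ))
      * (Real.Gamma ((l : ℝ) + m + δ) * Real.Gamma ((m : ℝ) + 2 + δ + δ / (m : ℝ)))
      / (Real.Gamma ((m : ℝ) + δ) * Real.Gamma ((l : ℝ) + m + 3 + δ + δ / (m : ℝ)))) :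
    Filter.Tendsto (fun k : ℕ => P k * (k : ℝ) ^ (3 + δ / (m : ℝ)))
      Filter.atTop (nhds c) := by
  have hm0 : (0 : ℝ) < m := by exact_mod_cast hm
  have ha : 0 < (m : ℝ) + δ := by linarith
  have hδm : -1 < δ / m := by rwa [lt_div_iff₀ hm0, neg_one_mul]
  have hb : 0 < (m : ℝ) + 3 + δ + δ / m := by linarith
  have hlim := (Real.tendsto_Gamma_nat_add_div_Gamma_nat_add_mul_rpow ha hb).const_mul c
  rw [mul_one] at hlim
  refine hlim.congr fun k => ?_
  rw [hP k, hc, show (m : ℝ) + 3 + δ + δ / m - (m + δ) = 3 + δ / m by ring]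
  simp only [← add_assoc]
  ring
end

section
/- For fixed a, b > 0, the ratio Γ(z+a)/Γ(z+b) = z^{a-b} + O(z^{a-b-1}) as z → ∞ (z real); in particular, z^{b-a} Γ(z+a)/Γ(z+b) → 1 and the difference z^{b-a}Γ(z+a)/Γ(z+b) - 1 is O(1/z). -/
/-!
Log-convexity of `Γ` gives Wendel's inequalities: for `0 ≤ s ≤ 1` and `x > 0`,
`x / (x + s) ≤ Γ(x + s) / (x ^ s Γ(x)) ≤ 1`, so this ratio is `1 + O(1/x)`. Since
`Γ(y + 1) = y Γ(y)`, raising `s` by one multiplies the ratio by `1 + s/x`, which extends the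
estimate to every exponent `c ≥ 0`. Finally `x^(b-a) Γ(x+a) / Γ(x+b)` is the quotient of the
ratios for `a` and for `b`.
-/

open Filter Asymptotics Real Topology Set

namespace Real

theorem Gamma_add_le_rpow_mul_Gamma {s x : ℝ} (hs0 : 0 ≤ s) (hs1 : s ≤ 1) (hx : 0 < x) :
    Gamma (x + s) ≤ x ^ s * Gamma x := by
  have hconv := convexOn_log_Gamma.2 (mem_Ioi.2 hx) (mem_Ioi.2 (by linarith : 0 < x + 1))
    (sub_nonneg.2 hs1) hs0 (by ring)
  have hmid : (1 - s) * x + s * (x + 1) = x + s := by ring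
  simp only [Function.comp, smul_eq_mul, hmid, Gamma_add_one hx.ne',
    log_mul hx.ne' (Gamma_pos_of_pos hx).ne'] at hconv
  rw [← log_le_log_iff (Gamma_pos_of_pos (by linarith)) (by positivity [Gamma_pos_of_pos hx]),
    log_mul (by positivity) (Gamma_pos_of_pos hx).ne', log_rpow hx]
  linarith

theorem rpow_mul_mul_Gamma_le_mul_Gamma_add {s x : ℝ} (hs0 : 0 ≤ s) (hs1 : s ≤ 1) (hx : 0 < x) :
    x ^ s * (x * Gamma x) ≤ (x + s) * Gamma (x + s) := by
  have hxs : 0 < x + s := by linarith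
  have hΓ : x * Gamma x ≤ (x + s) ^ (1 - s) * Gamma (x + s) := by
    rw [← Gamma_add_one hx.ne']
    simpa using Gamma_add_le_rpow_mul_Gamma (sub_nonneg.2 hs1) (by linarith) hxs
  calc x ^ s * (x * Gamma x)
      ≤ (x + s) ^ s * ((x + s) ^ (1 - s) * Gamma (x + s)) := by
        gcongr
        linarith
    _ = (x + s) * Gamma (x + s) := by
        rw [← mul_assoc, ← rpow_add hxs, add_sub_cancel, rpow_one]

noncomputable def wendelRatio (c x : ℝ) : ℝ := Gamma (x + c) / (x ^ c * Gamma x)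

theorem abs_wendelRatio_sub_one_le {s x : ℝ} (hs0 : 0 ≤ s) (hs1 : s ≤ 1) (hx : 0 < x) :
    |wendelRatio s x - 1| ≤ x⁻¹ := by
  have hden : 0 < x ^ s * Gamma x := by positivity [Gamma_pos_of_pos hx]
  have hupper : wendelRatio s x ≤ 1 :=
    (div_le_one hden).2 (Gamma_add_le_rpow_mul_Gamma hs0 hs1 hx)
  have hlower : x / (x + s) ≤ wendelRatio s x := by
    rw [wendelRatio, div_le_div_iff₀ (by linarith) hden]
    linarith [rpow_mul_mul_Gamma_le_mul_Gamma_add hs0 hs1 hx]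
  have hgap : 1 - x⁻¹ ≤ x / (x + s) := by
    have hexpand : x⁻¹ * (x + s) = 1 + s / x := by field_simp
    rw [le_div_iff₀ (by linarith), sub_mul, hexpand, one_mul]
    linarith [div_nonneg hs0 hx.le]
  rw [abs_le]
  constructor <;> linarith [inv_pos.2 hx]

theorem wendelRatio_add_one {c x : ℝ} (hx : 0 < x) (hxc : x + c ≠ 0) :
    wendelRatio (c + 1) x = (1 + c / x) * wendelRatio c x := by
  have hΓ := (Gamma_pos_of_pos hx).ne'
  have hpow := (rpow_pos_of_pos hx c).ne'
  rw [wendelRatio, wendelRatio, ← add_assoc, Gamma_add_one hxc, rpow_add_one hx.ne']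
  field_simp

theorem isBigO_wendelRatio_add_nat_sub_one {s : ℝ} (hs0 : 0 ≤ s) (hs1 : s ≤ 1) (n : ℕ) :
    (fun x => wendelRatio (s + n) x - 1) =O[atTop] fun x => x⁻¹ := by
  induction n with
  | zero =>
    refine IsBigO.of_bound 1 ?_
    filter_upwards [eventually_gt_atTop 0] with x hx
    rw [Nat.cast_zero, add_zero, norm_eq_abs, norm_of_nonneg (inv_pos.2 hx).le, one_mul]
    exact abs_wendelRatio_sub_one_le hs0 hs1 hx
  | succ n ih =>
    set c : ℝ := s + n
    have hc : 0 ≤ c := by positivity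
    have hrec : (fun x => (1 + c * x⁻¹) * (wendelRatio c x - 1) + c * x⁻¹) =ᶠ[atTop]
        fun x => wendelRatio (s + (n + 1 : ℕ)) x - 1 := by
      filter_upwards [eventually_gt_atTop 0] with x hx
      rw [Nat.cast_succ, ← add_assoc, wendelRatio_add_one hx (by positivity), div_eq_mul_inv]
      ring
    have hbounded : (fun x : ℝ => 1 + c * x⁻¹) =O[atTop] fun _ => (1 : ℝ) :=
      ((tendsto_inv_atTop_zero.const_mul c).const_add 1).isBigO_one ℝ
    refine IsBigO.congr' ?_ hrec EventuallyEq.rfl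
    simpa using (hbounded.mul ih).add ((isBigO_refl _ _).const_mul_left c)

theorem isBigO_wendelRatio_sub_one {c : ℝ} (hc : 0 ≤ c) :
    (fun x => wendelRatio c x - 1) =O[atTop] fun x => x⁻¹ := by
  have h := isBigO_wendelRatio_add_nat_sub_one (sub_nonneg.2 (Nat.floor_le hc))
    (by linarith [Nat.lt_floor_add_one c]) ⌊c⌋₊
  rwa [sub_add_cancel] at h

theorem wendelRatio_div_wendelRatio {a b x : ℝ} (hx : 0 < x) :
    wendelRatio a x / wendelRatio b x = x ^ (b - a) * Gamma (x + a) / Gamma (x + b) := by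
  have hΓ := (Gamma_pos_of_pos hx).ne'
  have hpow := (rpow_pos_of_pos hx a).ne'
  rw [wendelRatio, wendelRatio, rpow_sub hx]
  field_simp

end Real

theorem Asymptotics.IsBigO.div_sub_one {α 𝕜 : Type*} [NormedField 𝕜] {l : Filter α}
    {f g h : α → 𝕜} (hf : (fun x => f x - 1) =O[l] h) (hg : (fun x => g x - 1) =O[l] h)
    (hh : Tendsto h l (𝓝 0)) : (fun x => f x / g x - 1) =O[l] h := by
  have hg_one : Tendsto g l (𝓝 1) := by simpa using (hg.trans_tendsto hh).add_const 1
  have hdiv : (fun x => (f x - 1 - (g x - 1)) * (g x)⁻¹) =ᶠ[l] fun x => f x / g x - 1 := by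
    filter_upwards [hg_one.eventually_ne one_ne_zero] with x hx
    field_simp
    ring
  refine IsBigO.congr' ?_ hdiv EventuallyEq.rfl
  simpa using (hf.sub hg).mul ((hg_one.inv₀ one_ne_zero).isBigO_one 𝕜)

/-- For fixed `a, b > 0`, `Γ(z+a)/Γ(z+b) = z^{a-b} + O(z^{a-b-1})` as `z → ∞`;
in particular `z^{b-a}Γ(z+a)/Γ(z+b) → 1` and `z^{b-a}Γ(z+a)/Γ(z+b) - 1 = O(1/z)`. -/
theorem stmt14 (a b : ℝ) (ha : 0 < a) (hb : 0 < b) :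
    ((fun z : ℝ => Real.Gamma (z + a) / Real.Gamma (z + b) - z ^ (a - b))
        =O[atTop] fun z : ℝ => z ^ (a - b - 1))
    ∧ Tendsto (fun z : ℝ => z ^ (b - a) * Real.Gamma (z + a) / Real.Gamma (z + b))
        atTop (nhds 1)
    ∧ ((fun z : ℝ => z ^ (b - a) * Real.Gamma (z + a) / Real.Gamma (z + b) - 1)
        =O[atTop] fun z : ℝ => 1 / z) := by
  have hratio : (fun z : ℝ => z ^ (b - a) * Gamma (z + a) / Gamma (z + b) - 1)
      =O[atTop] fun z => z⁻¹ := by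
    refine ((isBigO_wendelRatio_sub_one ha.le).div_sub_one (isBigO_wendelRatio_sub_one hb.le)
      tendsto_inv_atTop_zero).congr' ?_ EventuallyEq.rfl
    filter_upwards [eventually_gt_atTop 0] with z hz
    rw [wendelRatio_div_wendelRatio hz]
  simp only [one_div]
  refine ⟨?_, by simpa using (hratio.trans_tendsto tendsto_inv_atTop_zero).add_const 1, hratio⟩
  have hfactor : (fun z : ℝ => z ^ (a - b) * (z ^ (b - a) * Gamma (z + a) / Gamma (z + b) - 1))
      =ᶠ[atTop] fun z => Gamma (z + a) / Gamma (z + b) - z ^ (a - b) := by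
    filter_upwards [eventually_gt_atTop 0] with z hz
    rw [mul_sub, mul_one, mul_div_assoc', ← mul_assoc, ← rpow_add hz,
      sub_add_sub_cancel', sub_self, rpow_zero, one_mul]
  have hpow : (fun z : ℝ => z ^ (a - b) * z⁻¹) =ᶠ[atTop] fun z => z ^ (a - b - 1) := by
    filter_upwards [eventually_gt_atTop 0] with z hz
    rw [rpow_sub_one hz.ne', div_eq_mul_inv]
  exact ((isBigO_refl _ _).mul hratio).congr' hfactor hpow
end

section
/- Let m ∈ ℕ, δ > -m, and let μ_{n,i} = E[W_{n,i}] be the expected in-degree of vertex i in G_n^{m,δ} for n ≥ i ≥ 1. Then there is a constant C depending only on m and δ such that |μ_{n,i}/(m+δ) + 1 - (n/i)^{1/(2+δ/m)}| ≤ C (n/i)^{1/(2+δ/m)} / i. -/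
/-!
Write `a = (1 + δ/m) / (2 + δ/m)`, so that `1 - a = 1 / (2 + δ/m)`. Log-convexity of `Γ` on
`[x, x + 1]` gives Wendel's inequality `Γ(x + a) ≤ x ^ a Γ(x)`, which squeezes the prefactor,
`N ^ (1 - a) ≤ Γ(N + 1) / Γ(N + a) ≤ N ^ (1 - a) (1 + a / N)` with `N = n m`, and every summand
`Γ(k + a) / Γ(k + 1)` with `(i - 1) m ≤ k < i m` between `(i m) ^ (a - 1)` and
`(i m) ^ a / ((i - 1) m + a)`. Multiplying, `μ_{n,i} / (m + δ) + 1` lies between `(n/i) ^ (1 - a)`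
and `(n/i) ^ (1 - a) (1 + m / ((i - 1) m + a))`, and `(i - 1) m + a ≥ a i` gives `C = m / a`.
-/

open Real Finset

section GammaRatio

variable {a x : ℝ}

theorem Gamma_add_le_rpow_mul_Gamma (hx : 0 < x) (ha0 : 0 < a) (ha1 : a < 1) :
    Gamma (x + a) ≤ x ^ a * Gamma x := by
  have hG := Gamma_pos_of_pos hx
  calc Gamma (x + a) = Gamma ((1 - a) * x + a * (x + 1)) := by ring_nf
    _ ≤ Gamma x ^ (1 - a) * Gamma (x + 1) ^ a :=
        Gamma_mul_add_mul_le_rpow_Gamma_mul_rpow_Gamma hx (by linarith) (by linarith) ha0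
          (by ring)
    _ = x ^ a * (Gamma x ^ (1 - a) * Gamma x ^ a) := by
        rw [Gamma_add_one hx.ne', mul_rpow hx.le hG.le]; ring
    _ = x ^ a * Gamma x := by rw [← rpow_add hG, sub_add_cancel, rpow_one]

theorem Gamma_add_one_le_rpow_mul_Gamma_add (hx : 0 < x + a) (ha0 : 0 < a) (ha1 : a < 1) :
    Gamma (x + 1) ≤ (x + a) ^ (1 - a) * Gamma (x + a) := by
  simpa using Gamma_add_le_rpow_mul_Gamma hx (sub_pos.2 ha1) (by linarith : 1 - a < 1)

theorem rpow_le_Gamma_add_one_div_Gamma_add (hx : 0 < x) (ha0 : 0 < a) (ha1 : a < 1) :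
    x ^ (1 - a) ≤ Gamma (x + 1) / Gamma (x + a) := by
  rw [le_div_iff₀ (Gamma_pos_of_pos (by linarith))]
  calc x ^ (1 - a) * Gamma (x + a) ≤ x ^ (1 - a) * (x ^ a * Gamma x) := by
        gcongr; exact Gamma_add_le_rpow_mul_Gamma hx ha0 ha1
    _ = Gamma (x + 1) := by
        rw [← mul_assoc, ← rpow_add hx, sub_add_cancel, rpow_one, Gamma_add_one hx.ne']

theorem Gamma_add_one_div_Gamma_add_le (hx : 0 < x) (ha0 : 0 < a) (ha1 : a < 1) :
    Gamma (x + 1) / Gamma (x + a) ≤ x ^ (1 - a) * (1 + a / x) := by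
  rw [div_le_iff₀ (Gamma_pos_of_pos (by linarith))]
  refine (Gamma_add_one_le_rpow_mul_Gamma_add (by linarith) ha0 ha1).trans ?_
  gcongr
  calc (x + a) ^ (1 - a) = x ^ (1 - a) * (1 + a / x) ^ (1 - a) := by
        rw [← mul_rpow hx.le (by positivity), mul_one_add, mul_div_cancel₀ _ hx.ne']
    _ ≤ x ^ (1 - a) * (1 + a / x) := by
        gcongr
        exact rpow_le_self_of_one_le (by simp; positivity) (by linarith)

theorem Gamma_add_div_Gamma_add_one_le (hx : 0 ≤ x) (ha0 : 0 < a) (ha1 : a < 1) :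
    Gamma (x + a) / Gamma (x + 1) ≤ (x + 1) ^ a / (x + a) := by
  have hxa : 0 < x + a := by linarith
  rw [div_le_div_iff₀ (Gamma_pos_of_pos (by linarith)) hxa, mul_comm, ← Gamma_add_one hxa.ne']
  calc Gamma (x + a + 1) = Gamma (x + 1 + a) := by ring_nf
    _ ≤ (x + 1) ^ a * Gamma (x + 1) := Gamma_add_le_rpow_mul_Gamma (by linarith) ha0 ha1

end GammaRatio

/-- The sum `∑_{j=1}^m Γ(K + j - 1 + a) / Γ(K + j)` of the paper, with `K = (i - 1) m`. -/
noncomputable def gammaBlockSum (a K : ℝ) (m : ℕ) : ℝ :=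
  ∑ j ∈ range m, Gamma (K + j + a) / Gamma (K + j + 1)

section GammaBlockSum

variable {a K : ℝ} {m : ℕ}

theorem gammaBlockSum_nonneg (hK : 0 ≤ K) (ha0 : 0 < a) : 0 ≤ gammaBlockSum a K m :=
  sum_nonneg fun j _ ↦ div_nonneg (Gamma_nonneg_of_nonneg (by positivity))
    (Gamma_nonneg_of_nonneg (by positivity))

theorem div_rpow_le_gammaBlockSum (hK : 0 ≤ K) (ha0 : 0 < a) (ha1 : a < 1) :
    m / (K + m) ^ (1 - a) ≤ gammaBlockSum a K m := by
  have hterm : ∀ j ∈ range m, 1 / (K + m) ^ (1 - a) ≤ Gamma (K + j + a) / Gamma (K + j + 1) := by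
    intro j hj
    have hjm : (j : ℝ) + 1 ≤ m := by exact_mod_cast mem_range.1 hj
    have hka : 0 < K + j + a := by linarith [j.cast_nonneg (α := ℝ)]
    rw [le_div_iff₀ (Gamma_pos_of_pos (by linarith)), one_div_mul_eq_div,
      div_le_iff₀ (rpow_pos_of_pos (by linarith) _)]
    calc Gamma (K + j + 1) ≤ (K + j + a) ^ (1 - a) * Gamma (K + j + a) :=
          Gamma_add_one_le_rpow_mul_Gamma_add hka ha0 ha1
      _ ≤ (K + m) ^ (1 - a) * Gamma (K + j + a) := by
          gcongr ?_ * _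
          exact rpow_le_rpow hka.le (by linarith) (by linarith)
      _ = Gamma (K + j + a) * (K + m) ^ (1 - a) := mul_comm _ _
  simpa [gammaBlockSum, div_eq_mul_one_div (m : ℝ)] using card_nsmul_le_sum _ _ _ hterm

theorem gammaBlockSum_le (hK : 0 ≤ K) (ha0 : 0 < a) (ha1 : a < 1) :
    gammaBlockSum a K m ≤ m * ((K + m) ^ a / (K + a)) := by
  have hterm : ∀ j ∈ range m, Gamma (K + j + a) / Gamma (K + j + 1) ≤ (K + m) ^ a / (K + a) := by
    intro j hj
    have hjm : (j : ℝ) + 1 ≤ m := by exact_mod_cast mem_range.1 hj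
    have hj0 : (0 : ℝ) ≤ j := j.cast_nonneg
    calc Gamma (K + j + a) / Gamma (K + j + 1) ≤ (K + j + 1) ^ a / (K + j + a) :=
          Gamma_add_div_Gamma_add_one_le (by linarith) ha0 ha1
      _ ≤ (K + m) ^ a / (K + a) :=
          div_le_div₀ (by positivity) (rpow_le_rpow (by linarith) (by linarith) ha0.le)
            (by linarith) (by linarith)
  simpa [gammaBlockSum] using sum_le_card_nsmul _ _ _ hterm

end GammaBlockSum

/-- `μ_{n,i} / (m + δ) + 1`, written with `a = (1 + δ/m) / (2 + δ/m)`. -/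
noncomputable def normalizedMeanInDegree (a : ℝ) (m n i : ℕ) : ℝ :=
  Gamma (n * m + 1) / Gamma (n * m + a) * gammaBlockSum a ((i - 1) * m) m / m

section NormalizedMeanInDegree

variable {a : ℝ} {m n i : ℕ}

theorem rpow_le_normalizedMeanInDegree (ha0 : 0 < a) (ha1 : a < 1) (hm : 1 ≤ m) (hi : 1 ≤ i)
    (hin : i ≤ n) : ((n : ℝ) / i) ^ (1 - a) ≤ normalizedMeanInDegree a m n i := by
  have hm0 : (0 : ℝ) < m := by exact_mod_cast hm
  have hi1 : (1 : ℝ) ≤ i := by exact_mod_cast hi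
  have hni : (i : ℝ) ≤ n := by exact_mod_cast hin
  have hN : (0 : ℝ) < n * m := by nlinarith
  have hu : (0 : ℝ) < i * m := by nlinarith
  have hS := div_rpow_le_gammaBlockSum (K := ((i : ℝ) - 1) * m) (m := m) (by nlinarith) ha0 ha1
  rw [show ((i : ℝ) - 1) * m + m = i * m by ring] at hS
  calc ((n : ℝ) / i) ^ (1 - a) = (n * m : ℝ) ^ (1 - a) * (m / (i * m : ℝ) ^ (1 - a)) / m := by
        rw [← mul_div_mul_right (n : ℝ) i hm0.ne', div_rpow hN.le hu.le]
        field_simp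
    _ ≤ normalizedMeanInDegree a m n i := by
        unfold normalizedMeanInDegree
        gcongr
        exact rpow_le_Gamma_add_one_div_Gamma_add hN ha0 ha1

theorem normalizedMeanInDegree_le (ha0 : 0 < a) (ha1 : a < 1) (hm : 1 ≤ m) (hi : 1 ≤ i)
    (hin : i ≤ n) :
    normalizedMeanInDegree a m n i ≤ ((n : ℝ) / i) ^ (1 - a) * (1 + m / (a * i)) := by
  have hm0 : (0 : ℝ) < m := by exact_mod_cast hm
  have hm1 : (1 : ℝ) ≤ m := by exact_mod_cast hm
  have hi1 : (1 : ℝ) ≤ i := by exact_mod_cast hi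
  have hni : (i : ℝ) ≤ n := by exact_mod_cast hin
  set N : ℝ := n * m
  set u : ℝ := i * m
  set K : ℝ := ((i : ℝ) - 1) * m
  have hu : 0 < u := by positivity
  have huN : u ≤ N := mul_le_mul_of_nonneg_right hni hm0.le
  have hK : 0 ≤ K := by nlinarith
  have hKa : a * i ≤ K + a := by nlinarith
  have hA : Gamma (N + 1) / Gamma (N + a) ≤ N ^ (1 - a) * (1 + a / u) := by
    refine (Gamma_add_one_div_Gamma_add_le (by linarith) ha0 ha1).trans ?_
    gcongr
  have hS : gammaBlockSum a K m ≤ m * (u ^ a / (K + a)) := by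
    simpa [show K + m = u by ring] using gammaBlockSum_le (m := m) hK ha0 ha1
  calc normalizedMeanInDegree a m n i
      ≤ N ^ (1 - a) * (1 + a / u) * (m * (u ^ a / (K + a))) / m := by
        unfold normalizedMeanInDegree
        gcongr
        exact gammaBlockSum_nonneg hK ha0
    _ = (N / u) ^ (1 - a) * (1 + m / (K + a)) := by
        rw [div_rpow (by positivity) hu.le, rpow_sub hu, rpow_one]
        field_simp
        ring
    _ ≤ ((n : ℝ) / i) ^ (1 - a) * (1 + m / (a * i)) := by
        rw [show N / u = n / i from mul_div_mul_right _ _ hm0.ne']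
        gcongr

theorem abs_normalizedMeanInDegree_sub_rpow_le (ha0 : 0 < a) (ha1 : a < 1) (hm : 1 ≤ m)
    (hi : 1 ≤ i) (hin : i ≤ n) :
    |normalizedMeanInDegree a m n i - ((n : ℝ) / i) ^ (1 - a)|
      ≤ m / a * ((n : ℝ) / i) ^ (1 - a) / i := by
  have hlow := rpow_le_normalizedMeanInDegree ha0 ha1 hm hi hin
  have hup := normalizedMeanInDegree_le ha0 ha1 hm hi hin
  rw [abs_of_nonneg (sub_nonneg.2 hlow)]
  calc normalizedMeanInDegree a m n i - ((n : ℝ) / i) ^ (1 - a)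
      ≤ ((n : ℝ) / i) ^ (1 - a) * (1 + m / (a * i)) - ((n : ℝ) / i) ^ (1 - a) := by gcongr
    _ = m / a * ((n : ℝ) / i) ^ (1 - a) / i := by field_simp; ring

end NormalizedMeanInDegree

/-- For `m ≥ 1`, `δ > -m`, let `μ n i = E[W_{n,i}]` be the expected in-degree of vertex `i`
in `G_n^{m,δ}`, given by the gamma-function formula obtained from the martingale identity.
Then there is a constant `C = C_{m,δ}` with
`|μ_{n,i}/(m+δ) + 1 - (n/i)^{1/(2+δ/m)}| ≤ C (n/i)^{1/(2+δ/m)} / i` for all `1 ≤ i ≤ n`. -/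
theorem stmt18 (m : ℕ) (hm : 1 ≤ m) (δ : ℝ) (hδ : -(m : ℝ) < δ)
    (μ : ℕ → ℕ → ℝ)
    (hμ : ∀ n i : ℕ, 1 ≤ i → i ≤ n →
      μ n i + ((m : ℝ) + δ)
        = (1 + δ / (m : ℝ))
            * (Real.Gamma ((n : ℝ) * m + 1)
                / Real.Gamma ((n : ℝ) * m + (1 + δ / (m : ℝ)) / (2 + δ / (m : ℝ))))
            * ∑ j ∈ Finset.range m,
                Real.Gamma (((i : ℝ) - 1) * m + ((j : ℝ) + 1) - 1
                    + (1 + δ / (m : ℝ)) / (2 + δ / (m : ℝ)))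
                  / Real.Gamma (((i : ℝ) - 1) * m + ((j : ℝ) + 1))) :
    ∃ C : ℝ, ∀ n i : ℕ, 1 ≤ i → i ≤ n →
      |μ n i / ((m : ℝ) + δ) + 1 - ((n : ℝ) / i) ^ (1 / (2 + δ / (m : ℝ)))|
        ≤ C * ((n : ℝ) / i) ^ (1 / (2 + δ / (m : ℝ))) / i := by
  have hm0 : (0 : ℝ) < m := by exact_mod_cast hm
  have hmδ : (m : ℝ) + δ = m * (1 + δ / m) := by field_simp
  set q := δ / m
  have hq : -1 < q := by rw [lt_div_iff₀ hm0]; linarith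
  have hexp : 1 / (2 + q) = 1 - (1 + q) / (2 + q) := by
    field_simp [show 2 + q ≠ 0 by linarith]; ring
  set a := (1 + q) / (2 + q)
  have ha0 : 0 < a := div_pos (by linarith) (by linarith)
  have ha1 : a < 1 := (div_lt_one (by linarith)).2 (by linarith)
  refine ⟨m / a, fun n i hi hin ↦ ?_⟩
  have hsum : ∑ j ∈ range m, Gamma (((i : ℝ) - 1) * m + ((j : ℝ) + 1) - 1 + a)
      / Gamma (((i : ℝ) - 1) * m + ((j : ℝ) + 1)) = gammaBlockSum a ((i - 1) * m) m :=
    sum_congr rfl fun j _ ↦ by ring_nf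
  have hX : μ n i / (m + δ) + 1 = normalizedMeanInDegree a m n i := by
    rw [eq_sub_of_add_eq (hμ n i hi hin), hsum, hmδ, normalizedMeanInDegree]
    field_simp [show 1 + q ≠ 0 by linarith]
    ring
  rw [hX, hexp]
  exact abs_normalizedMeanInDegree_sub_rpow_le ha0 ha1 hm hi hin
end
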